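/- arXiv:2101.08222 — 6 statements merged into one kernel-verified Lean document; each statement's English description precedes it below -/
import Mathlib

section
/- Let (Z_n) be a Markov chain on a standard Borel space M with Markov operator P and stationary probability measure π. Let f be a bounded measurable function on M and suppose there exists a bounded measurable function φ with φ - Pφ = f - ∫f dπ. Then for every t > 0, n ∈ ℕ and starting point x ∈ M, P_x( |Σ_{i=1}^n f(Z_i) - n∫f dπ| ≥ nt ) ≤ 2 exp(-n t² / (32 ‖φ‖_∞²)). -/
/-! By the Poisson equation the centred sum is a martingale plus a boundary term,
`∑_{i=1}^n (f(Z_i) - π f) = ∑_{i<n} (φ(Z_{i+1}) - Pφ(Z_i)) + (Pφ(Z_0) - Pφ(Z_n))`.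
The martingale increments are bounded by `2‖φ‖`, so the conditional form of Hoeffding's lemma
(Azuma–Hoeffding) makes the martingale sub-Gaussian with variance proxy `4 n ‖φ‖²`. The boundary
term is at most `2‖φ‖ ≤ n t / 2` once `n t ≥ 4‖φ‖`; below that threshold either the claimed bound
exceeds one or `t > 2‖φ‖`, and then the event is empty because every summand is at most `2‖φ‖`. -/

open MeasureTheory ProbabilityTheory Finset
open scoped NNReal

lemma Real.exp_mul_le_cosh_add_div_mul_sinh {c d : ℝ} (hd : |d| ≤ c) (l : ℝ) :
    exp (l * d) ≤ cosh (l * c) + d / c * sinh (l * c) := by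
  rcases eq_or_ne c 0 with rfl | hc
  · simp [abs_nonpos_iff.1 hd]
  have h := exp_mul_le_cosh_add_mul_sinh (t := d / c) (x := l * c) <| by
    rw [abs_div]; exact div_le_one_of_le₀ (hd.trans (le_abs_self c)) (abs_nonneg c)
  rwa [show d / c * (l * c) = l * d by field_simp] at h

lemma Real.exp_mul_le_exp_abs_mul {x C : ℝ} (hx : |x| ≤ C) (l : ℝ) :
    exp (l * x) ≤ exp (|l| * C) :=
  exp_le_exp.2 <| (le_abs_self _).trans <|
    abs_mul l x ▸ mul_le_mul_of_nonneg_left hx (abs_nonneg l)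

lemma Finset.abs_sum_le_card_mul {ι : Type*} (s : Finset ι) {a : ι → ℝ} {c : ℝ}
    (ha : ∀ i ∈ s, |a i| ≤ c) : |∑ i ∈ s, a i| ≤ #s * c :=
  (abs_sum_le_sum_abs _ _).trans <| by simpa using sum_le_card_nsmul s _ c ha

lemma abs_integral_le_of_abs_le {α : Type*} [MeasurableSpace α] {ν : Measure α}
    [IsProbabilityMeasure ν] {g : α → ℝ} {C : ℝ} (hg : ∀ y, |g y| ≤ C) : |∫ y, g y ∂ν| ≤ C := by
  simpa using norm_integral_le_of_norm_le_const (μ := ν) (f := g) (ae_of_all _ hg)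

lemma Real.one_le_two_mul_exp_neg_div {x C : ℝ} (hx : x ≤ 8 * C ^ 2) :
    1 ≤ 2 * exp (-x / (32 * C ^ 2)) := by
  rcases eq_or_ne C 0 with rfl | hC
  · simp
  have h : -(1 / 4) ≤ -x / (32 * C ^ 2) := by
    rw [le_div_iff₀ (by positivity)]; linarith
  linarith [add_one_le_exp (-x / (32 * C ^ 2))]

lemma sum_Icc_sub_eq_sum_range_sub_add {G : Type*} [AddCommGroup G] (a b : ℕ → G) (n : ℕ) :
    ∑ i ∈ Icc 1 n, (a i - b i) = ∑ i ∈ range n, (a (i + 1) - b i) + (b 0 - b n) := by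
  induction n with
  | zero => simp
  | succ n ih =>
    rw [sum_Icc_succ_top (by omega), ih, sum_range_succ]; abel

lemma abs_sum_Icc_sub_le_abs_sum_range_sub_add {a b : ℕ → ℝ} {C : ℝ} (hb : ∀ i, |b i| ≤ C)
    (n : ℕ) : |∑ i ∈ Icc 1 n, (a i - b i)| ≤ |∑ i ∈ range n, (a (i + 1) - b i)| + 2 * C := by
  rw [sum_Icc_sub_eq_sum_range_sub_add]
  exact (abs_add_le _ _).trans (add_le_add_right ((abs_sub _ _).trans (by linarith [hb 0, hb n])) _)

section Azuma

/- Mathlib's Azuma–Hoeffding inequality `measure_sum_ge_le_of_hasCondSubgaussianMGF` needs a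
standard Borel sample space; the direct argument below works on any probability space. -/

open Real

variable {Ω : Type*} {m mΩ : MeasurableSpace Ω} {μ : Measure Ω}

lemma integral_mul_eq_zero_of_condExp_eq_zero [IsFiniteMeasure μ] (hm : m ≤ mΩ) {g D : Ω → ℝ}
    (hg : StronglyMeasurable[m] g) {C : ℝ} (hgC : ∀ ω, |g ω| ≤ C) (hD : Integrable D μ)
    (hcond : μ[D | m] =ᵐ[μ] 0) :
    ∫ ω, g ω * D ω ∂μ = 0 := by
  calc ∫ ω, g ω * D ω ∂μ = ∫ ω, μ[g * D | m] ω ∂μ := (integral_condExp hm).symm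
    _ = ∫ ω, (g * μ[D | m]) ω ∂μ :=
      integral_congr_ae (condExp_stronglyMeasurable_mul_of_bound hm hg hD C (ae_of_all _ hgC))
    _ = ∫ ω, (0 : Ω → ℝ) ω ∂μ := integral_congr_ae (hcond.mono fun ω h => by simp [h])
    _ = 0 := by simp

lemma integrable_exp_mul_of_abs_le [IsFiniteMeasure μ] {X : Ω → ℝ} (hX : AEStronglyMeasurable X μ)
    {C : ℝ} (hXC : ∀ ω, |X ω| ≤ C) (l : ℝ) : Integrable (fun ω => exp (l * X ω)) μ :=
  Integrable.of_bound (by fun_prop) (exp (|l| * C)) <| ae_of_all _ fun ω => by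
    rw [Real.norm_eq_abs, abs_exp]; exact exp_mul_le_exp_abs_mul (hXC ω) l

lemma mgf_add_le_cosh_mul_mgf [IsFiniteMeasure μ] (hm : m ≤ mΩ) {X D : Ω → ℝ} {C c : ℝ}
    (hX : StronglyMeasurable[m] X) (hXC : ∀ ω, |X ω| ≤ C) (hD : StronglyMeasurable D)
    (hDc : ∀ ω, |D ω| ≤ c) (hcond : μ[D | m] =ᵐ[μ] 0) (l : ℝ) :
    mgf (X + D) μ l ≤ cosh (l * c) * mgf X μ l := by
  have hX' : StronglyMeasurable X := hX.mono hm
  have hexpX := integrable_exp_mul_of_abs_le (μ := μ) hX'.aestronglyMeasurable hXC l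
  have hexpXD : Integrable (fun ω => exp (l * X ω) * D ω) μ :=
    hexpX.mul_of_top_left (memLp_top_of_bound hD.aestronglyMeasurable c (ae_of_all _ hDc))
  have horth : ∫ ω, exp (l * X ω) * D ω ∂μ = 0 :=
    integral_mul_eq_zero_of_condExp_eq_zero hm (by fun_prop) (C := exp (|l| * C))
      (fun ω => by rw [abs_exp]; exact exp_mul_le_exp_abs_mul (hXC ω) l)
      (Integrable.of_bound hD.aestronglyMeasurable c (ae_of_all _ hDc)) hcond
  have hexpXD' := integrable_exp_mul_of_abs_le (μ := μ) (hX'.add hD).aestronglyMeasurable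
    (fun ω => (abs_add_le _ _).trans (add_le_add (hXC ω) (hDc ω))) l
  calc mgf (X + D) μ l
      ≤ ∫ ω, cosh (l * c) * exp (l * X ω) + sinh (l * c) / c * (exp (l * X ω) * D ω) ∂μ := by
        refine integral_mono hexpXD' ((hexpX.const_mul _).add (hexpXD.const_mul _)) fun ω => ?_
        calc exp (l * (X + D) ω) = exp (l * X ω) * exp (l * D ω) := by
              rw [Pi.add_apply, mul_add, exp_add]
          _ ≤ exp (l * X ω) * (cosh (l * c) + D ω / c * sinh (l * c)) := by
              gcongr; exact exp_mul_le_cosh_add_div_mul_sinh (hDc ω) l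
          _ = _ := by ring
    _ = cosh (l * c) * mgf X μ l := by
        rw [integral_add (hexpX.const_mul _) (hexpXD.const_mul _), integral_const_mul,
          integral_const_mul, horth, mul_zero, add_zero, mgf]

lemma ProbabilityTheory.HasSubgaussianMGF.measure_abs_ge_le [IsFiniteMeasure μ] {X : Ω → ℝ}
    {c : ℝ≥0} (h : HasSubgaussianMGF X c μ) {ε : ℝ} (hε : 0 ≤ ε) :
    μ {ω | ε ≤ |X ω|} ≤ ENNReal.ofReal (2 * exp (-ε ^ 2 / (2 * c))) := by
  have hsplit : {ω | ε ≤ |X ω|} = {ω | ε ≤ X ω} ∪ {ω | ε ≤ (-X) ω} := by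
    ext ω; simp [le_abs', le_neg, or_comm]
  calc μ {ω | ε ≤ |X ω|} ≤ μ {ω | ε ≤ X ω} + μ {ω | ε ≤ (-X) ω} :=
        hsplit ▸ measure_union_le _ _
    _ = ENNReal.ofReal (μ.real {ω | ε ≤ X ω}) + ENNReal.ofReal (μ.real {ω | ε ≤ (-X) ω}) := by
        rw [ofReal_measureReal, ofReal_measureReal]
    _ ≤ ENNReal.ofReal (exp (-ε ^ 2 / (2 * c))) + ENNReal.ofReal (exp (-ε ^ 2 / (2 * c))) :=
        add_le_add (ENNReal.ofReal_le_ofReal (h.measure_ge_le hε))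
          (ENNReal.ofReal_le_ofReal (h.neg.measure_ge_le hε))
    _ = ENNReal.ofReal (2 * exp (-ε ^ 2 / (2 * c))) := by
        rw [← ENNReal.ofReal_add (exp_pos _).le (exp_pos _).le, ← two_mul]

variable [IsProbabilityMeasure μ] {ℱ : Filtration ℕ mΩ} {D : ℕ → Ω → ℝ}

lemma mgf_sum_le_cosh_pow {c : ℝ} (hD : ∀ i, StronglyMeasurable[ℱ (i + 1)] (D i))
    (hDc : ∀ i ω, |D i ω| ≤ c) (hcond : ∀ i, μ[D i | ℱ i] =ᵐ[μ] 0) (l : ℝ) (n : ℕ) :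
    mgf (fun ω => ∑ i ∈ range n, D i ω) μ l ≤ cosh (l * c) ^ n := by
  induction n with
  | zero => simp [mgf]
  | succ n ih =>
    have hsum : StronglyMeasurable[ℱ n] fun ω => ∑ i ∈ range n, D i ω :=
      Finset.stronglyMeasurable_fun_sum _ fun i hi =>
        (hD i).mono (ℱ.mono (Nat.succ_le_of_lt (mem_range.1 hi)))
    calc mgf (fun ω => ∑ i ∈ range (n + 1), D i ω) μ l
        = mgf ((fun ω => ∑ i ∈ range n, D i ω) + D n) μ l := by simp only [sum_range_succ]; rfl
      _ ≤ cosh (l * c) * mgf (fun ω => ∑ i ∈ range n, D i ω) μ l :=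
        mgf_add_le_cosh_mul_mgf (ℱ.le n) hsum
          (fun ω => by simpa using abs_sum_le_card_mul (range n) fun i _ => hDc i ω)
          ((hD n).mono (ℱ.le _)) (hDc n) (hcond n) l
      _ ≤ cosh (l * c) ^ (n + 1) := by
        rw [pow_succ']; exact mul_le_mul_of_nonneg_left ih (cosh_pos _).le

lemma hasSubgaussianMGF_sum_of_condExp_eq_zero {c : ℝ≥0}
    (hD : ∀ i, StronglyMeasurable[ℱ (i + 1)] (D i)) (hDc : ∀ i ω, |D i ω| ≤ c)
    (hcond : ∀ i, μ[D i | ℱ i] =ᵐ[μ] 0) (n : ℕ) :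
    HasSubgaussianMGF (fun ω => ∑ i ∈ range n, D i ω) (n * c ^ 2) μ where
  integrable_exp_mul l :=
    integrable_exp_mul_of_abs_le
      (Finset.aestronglyMeasurable_fun_sum _ fun i _ =>
        ((hD i).mono (ℱ.le _)).aestronglyMeasurable)
      (fun ω => by simpa using abs_sum_le_card_mul (range n) fun i _ => hDc i ω) l
  mgf_le l := calc
    _ ≤ cosh (l * c) ^ n := mgf_sum_le_cosh_pow hD hDc hcond l n
    _ ≤ exp ((l * c) ^ 2 / 2) ^ n := pow_le_pow_left₀ (cosh_pos _).le (cosh_le_exp_half_sq _) n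
    _ = exp (↑(n * c ^ 2 : ℝ≥0) * l ^ 2 / 2) := by
      rw [← exp_nat_mul]; push_cast; ring_nf

end Azuma

section MarkovChain

variable {M Ω : Type*} [MeasurableSpace M] {mΩ : MeasurableSpace Ω} {P : Kernel M M}
  {Pr : Measure Ω} {ℱ : Filtration ℕ mΩ} {Z : ℕ → Ω → M}

variable (P Pr ℱ Z) in
structure IsMarkovChain : Prop where
  adapted : ∀ n, Measurable[ℱ n] (Z n)
  condExp_eq : ∀ (n : ℕ) (g : M → ℝ), Measurable g → (∃ C, ∀ y, |g y| ≤ C) →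
    (fun ω => ∫ z, g z ∂(P (Z n ω))) =ᵐ[Pr] Pr[fun ω => g (Z (n + 1) ω)|ℱ n]

variable [IsMarkovKernel P] {φ : M → ℝ}

lemma condExp_sub_integral_kernel_eq_zero [IsFiniteMeasure Pr]
    (hZ : IsMarkovChain P Pr ℱ Z) (hφ : Measurable φ) {C : ℝ} (hφC : ∀ y, |φ y| ≤ C) (n : ℕ) :
    Pr[fun ω => φ (Z (n + 1) ω) - ∫ z, φ z ∂(P (Z n ω)) | ℱ n] =ᵐ[Pr] 0 := by
  have hPφ : Measurable fun y => ∫ z, φ z ∂(P y) :=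
    (hφ.stronglyMeasurable.integral_kernel (κ := P)).measurable
  have hPφZ : StronglyMeasurable[ℱ n] fun ω => ∫ z, φ z ∂(P (Z n ω)) :=
    (hPφ.comp (hZ.adapted n)).stronglyMeasurable
  have hφZ_int : Integrable (fun ω => φ (Z (n + 1) ω)) Pr :=
    .of_bound ((hφ.comp ((hZ.adapted _).mono (ℱ.le _) le_rfl)).aestronglyMeasurable) C
      (ae_of_all _ fun ω => hφC _)
  have hPφZ_int : Integrable (fun ω => ∫ z, φ z ∂(P (Z n ω))) Pr :=
    .of_bound (hPφZ.mono (ℱ.le n)).aestronglyMeasurable C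
      (ae_of_all _ fun ω => abs_integral_le_of_abs_le hφC)
  refine (condExp_sub hφZ_int hPφZ_int (ℱ n)).trans ?_
  filter_upwards [hZ.condExp_eq n φ hφ ⟨C, hφC⟩] with ω hcond
  rw [Pi.sub_apply, ← hcond, condExp_of_stronglyMeasurable (ℱ.le n) hPφZ hPφZ_int,
    sub_self, Pi.zero_apply]

lemma hasSubgaussianMGF_sum_sub_integral_kernel [IsProbabilityMeasure Pr]
    (hZ : IsMarkovChain P Pr ℱ Z) (hφ : Measurable φ) {C : ℝ≥0} (hφC : ∀ y, |φ y| ≤ C) (n : ℕ) :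
    HasSubgaussianMGF (fun ω => ∑ i ∈ range n, (φ (Z (i + 1) ω) - ∫ z, φ z ∂(P (Z i ω))))
      (n * (2 * C) ^ 2) Pr := by
  have hPφ : Measurable fun y => ∫ z, φ z ∂(P y) :=
    (hφ.stronglyMeasurable.integral_kernel (κ := P)).measurable
  refine hasSubgaussianMGF_sum_of_condExp_eq_zero (ℱ := ℱ) (fun i => ?_) (fun i ω => ?_)
    (condExp_sub_integral_kernel_eq_zero hZ hφ hφC) n
  · exact ((hφ.comp (hZ.adapted (i + 1))).sub
      ((hPφ.comp (hZ.adapted i)).mono (ℱ.mono i.le_succ) le_rfl)).stronglyMeasurable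
  · push_cast
    exact (abs_sub _ _).trans
      (by linarith [hφC (Z (i + 1) ω), abs_integral_le_of_abs_le (ν := P (Z i ω)) hφC])

end MarkovChain

theorem markov_chain_concentration_general
    {M : Type*} [MeasurableSpace M]
    (P : Kernel M M) [IsMarkovKernel P]
    (π : Measure M)
    (f : M → ℝ)
    (φ : M → ℝ) (hφ : Measurable φ) (Cφ : ℝ) (hφb : ∀ y, |φ y| ≤ Cφ)
    (hPoisson : ∀ y, φ y - ∫ z, φ z ∂(P y) = f y - ∫ z, f z ∂π)
    {Ω : Type*} {mΩ : MeasurableSpace Ω} (Pr : Measure Ω) [IsProbabilityMeasure Pr]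
    (ℱ : Filtration ℕ mΩ) (Z : ℕ → Ω → M)
    (hadapted : ∀ n, Measurable[ℱ n] (Z n))
    (hMarkov : ∀ (n : ℕ) (g : M → ℝ), Measurable g → (∃ C, ∀ y, |g y| ≤ C) →
      (fun ω => ∫ z, g z ∂(P (Z n ω))) =ᵐ[Pr] Pr[fun ω => g (Z (n + 1) ω)|ℱ n])
    (t : ℝ) (ht : 0 < t) (n : ℕ) :
    Pr {ω | (n : ℝ) * t ≤ |(∑ i ∈ Finset.Icc 1 n, f (Z i ω)) - n * ∫ z, f z ∂π|} ≤
      ENNReal.ofReal (2 * Real.exp (-((n : ℝ) * t ^ 2) / (32 * Cφ ^ 2))) := by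
  have hPφb (y : M) : |∫ z, φ z ∂(P y)| ≤ Cφ := abs_integral_le_of_abs_le hφb
  have hdev (ω : Ω) : (∑ i ∈ Icc 1 n, f (Z i ω)) - n * ∫ z, f z ∂π
      = ∑ i ∈ Icc 1 n, (φ (Z i ω) - ∫ z, φ z ∂(P (Z i ω))) := by
    simp [hPoisson, sum_sub_distrib]
  rcases le_or_gt (n * t ^ 2) (8 * Cφ ^ 2) with hsmall | hlarge
  · exact prob_le_one.trans (ENNReal.one_le_ofReal.2 (Real.one_le_two_mul_exp_neg_div hsmall))
  rcases lt_or_ge (2 * Cφ) t with ht2 | ht2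
  · have hn : (0 : ℝ) < n := by nlinarith [sq_nonneg Cφ, sq_nonneg t]
    suffices {ω | (n : ℝ) * t ≤ |(∑ i ∈ Icc 1 n, f (Z i ω)) - n * ∫ z, f z ∂π|} = ∅ by
      simp [this]
    refine Set.eq_empty_of_forall_notMem fun ω hω => ?_
    have hbound := abs_sum_le_card_mul (Icc 1 n) fun i _ =>
      (abs_sub _ _).trans (add_le_add (hφb (Z i ω)) (hPφb (Z i ω)))
    simp only [Set.mem_ofPred_eq, hdev, Nat.card_Icc, add_tsub_cancel_right] at hω hbound
    nlinarith
  · have hCφ : 0 < Cφ := by linarith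
    have hnt : 4 * Cφ ≤ n * t := by nlinarith
    have hS := hasSubgaussianMGF_sum_sub_integral_kernel ⟨hadapted, hMarkov⟩ hφ
      (C := Cφ.toNNReal) (by simpa [hCφ.le] using hφb) n
    calc _ ≤ Pr {ω | n * t / 2 ≤
          |∑ i ∈ range n, (φ (Z (i + 1) ω) - ∫ z, φ z ∂(P (Z i ω)))|} := by
          refine measure_mono fun ω hω => ?_
          have := abs_sum_Icc_sub_le_abs_sum_range_sub_add (a := fun i => φ (Z i ω))
            (fun i => hPφb (Z i ω)) n
          simp only [Set.mem_ofPred_eq, hdev] at hω ⊢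
          linarith
      _ ≤ _ := hS.measure_abs_ge_le (by positivity)
      _ = _ := by
          push_cast
          rw [Real.coe_toNNReal _ hCφ.le]
          congr 3
          field_simp
          ring

/-- Let `(Z_n)` be a Markov chain on a standard Borel space `M` with Markov
operator (kernel) `P` and `P`-stationary probability measure `π`, started at `x`. Let `f` be
a bounded measurable function and `φ` a bounded measurable solution of the Poisson equation
`φ - Pφ = f - ∫ f dπ` with `‖φ‖_∞ ≤ Cφ`. Then for every `t > 0` and `n`,
`P_x(|Σ_{i=1}^n f(Z_i) - n ∫ f dπ| ≥ n t) ≤ 2 exp(- n t² / (32 Cφ²))`. -/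
theorem markov_chain_concentration
    {M : Type*} [MeasurableSpace M] [StandardBorelSpace M]
    (P : Kernel M M) [IsMarkovKernel P]
    (π : Measure M) [IsProbabilityMeasure π] (hπ : π.bind (fun y => P y) = π)
    (f : M → ℝ) (hf : Measurable f) (Cf : ℝ) (hfb : ∀ y, |f y| ≤ Cf)
    (φ : M → ℝ) (hφ : Measurable φ) (Cφ : ℝ) (hφb : ∀ y, |φ y| ≤ Cφ)
    (hPoisson : ∀ y, φ y - ∫ z, φ z ∂(P y) = f y - ∫ z, f z ∂π)
    {Ω : Type*} {mΩ : MeasurableSpace Ω} (Pr : Measure Ω) [IsProbabilityMeasure Pr]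
    (ℱ : Filtration ℕ mΩ) (Z : ℕ → Ω → M) (x : M)
    (hZ0 : ∀ ω, Z 0 ω = x)
    (hadapted : ∀ n, Measurable[ℱ n] (Z n))
    (hMarkov : ∀ (n : ℕ) (g : M → ℝ), Measurable g → (∃ C, ∀ y, |g y| ≤ C) →
      (fun ω => ∫ z, g z ∂(P (Z n ω))) =ᵐ[Pr] Pr[fun ω => g (Z (n + 1) ω)|ℱ n])
    (t : ℝ) (ht : 0 < t) (n : ℕ) :
    Pr {ω | (n : ℝ) * t ≤ |(∑ i ∈ Finset.Icc 1 n, f (Z i ω)) - n * ∫ z, f z ∂π|} ≤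
      ENNReal.ofReal (2 * Real.exp (-((n : ℝ) * t ^ 2) / (32 * Cφ ^ 2))) :=
  markov_chain_concentration_general P π f φ hφ Cφ hφb hPoisson Pr ℱ Z hadapted hMarkov t ht n
end

section
/- Let G be a group acting measurably on a space X, σ: G × X → ℝ an additive cocycle (σ(g₁g₂, x) = σ(g₁, g₂x) + σ(g₂, x)) bounded on S × X where S is the support of a probability measure μ on G. Set κ_S = sup{|σ(g,x)| : g ∈ S, x ∈ X}. Let ν be a μ-stationary probability measure on X and ℓ(μ) = ∬ σ(g,x) dμ(g) dν(x). If there exists a bounded measurable ψ on X solving ψ(x) - ∫ψ(gx) dμ(g) = ∫σ(g,x) dμ(g) - ℓ(μ), then for every t > 0, n ∈ ℕ and x ∈ X, P(|σ(L_n, x) - nℓ(μ)| ≥ nt) ≤ 2 exp(-n t² / (32 (κ_S + ‖ψ‖_∞)²)), where L_n = X_n ⋯ X_1 with X_i i.i.d. of law μ. -/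
/-!
By the Poisson equation, `f g y = σ g y - ℓ + (ψ (g • y) - ψ y)` has `μ`-mean zero for every `y`
and is bounded by `2 (κS + Cψ)` on `S`, and the cocycle identity telescopes the martingale
`M_n = ∑_{i<n} f (X_{i+1}) (L_i x)` into `σ (L_n, x) - n ℓ + (ψ (L_n x) - ψ x)`. Since `X_{k+1}`
is independent of `(M_k, L_k x)`, Hoeffding's lemma for each increment multiplies up
(Azuma–Hoeffding) to `P(|M_n| ≥ n t / 2) ≤ 2 exp (-n t² / (32 (κS + Cψ)²))`, and
`|σ (L_n, x) - n ℓ| ≥ n t` forces `|M_n| ≥ n t / 2` once `n t ≥ 4 Cψ`. Otherwise either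
`t ≤ 2 κS` and the bound is at least `1`, or `t > 2 κS ≥ |σ| + |ℓ|` and the event is null.
-/

open MeasureTheory ProbabilityTheory Real
open scoped NNReal

namespace ProbabilityTheory

section IndepStep

variable {Ω β γ : Type*} {mΩ : MeasurableSpace Ω} [MeasurableSpace β] [MeasurableSpace γ]
  {P : Measure Ω} [IsFiniteMeasure P] {V : Ω → β} {Z : Ω → γ} {a : β → ℝ} {f : β → γ → ℝ}
  {ca cf : ℝ≥0}

lemma HasSubgaussianMGF.add_comp_of_indepFun (hV : Measurable V) (hZ : Measurable Z)
    (hVZ : IndepFun V Z P) (ha : Measurable a) (hf : Measurable (Function.uncurry f))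
    (hA : HasSubgaussianMGF (fun ω ↦ a (V ω)) ca P)
    (hF : ∀ v, HasSubgaussianMGF (f v) cf (P.map Z)) :
    HasSubgaussianMGF (fun ω ↦ a (V ω) + f (V ω) (Z ω)) (ca + cf) P := by
  set ρ := P.map V
  set η := P.map Z
  set H : ℝ → β × γ → ℝ := fun t p ↦ exp (t * (a p.1 + f p.1 p.2))
  have hmap : P.map (fun ω ↦ (V ω, Z ω)) = ρ.prod η :=
    (indepFun_iff_map_prod_eq_prod_map_map hV.aemeasurable hZ.aemeasurable).mp hVZ
  have hVZm : Measurable fun ω ↦ (V ω, Z ω) := hV.prodMk hZ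
  have hHm (t : ℝ) : Measurable (H t) := by
    have := hf
    fun_prop
  have hH (t : ℝ) (v : β) (z : γ) : H t (v, z) = exp (t * a v) * exp (t * f v z) := by
    simp only [H, mul_add, exp_add]
  have hAV (t : ℝ) : Integrable (fun v ↦ exp (t * a v)) ρ :=
    (integrable_map_measure (by fun_prop) hV.aemeasurable).mpr (hA.integrable_exp_mul t)
  have hmgf (t : ℝ) (v : β) : mgf (f v) η t ≤ exp (cf * t ^ 2 / 2) := (hF v).mgf_le t
  have hint (t : ℝ) : Integrable (H t) (ρ.prod η) := by
    refine (integrable_prod_iff (hHm t).aestronglyMeasurable).mpr ⟨?_, ?_⟩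
    · refine Filter.Eventually.of_forall fun v ↦ ?_
      simp_rw [hH]
      exact ((hF v).integrable_exp_mul t).const_mul _
    · refine ((hAV t).mul_const (exp (cf * t ^ 2 / 2))).mono'
        (hHm t).norm.stronglyMeasurable.integral_prod_right'.aestronglyMeasurable
        (Filter.Eventually.of_forall fun v ↦ ?_)
      simp only [hH, norm_mul, Real.norm_eq_abs, abs_exp, integral_const_mul]
      rw [abs_of_nonneg (integral_nonneg fun _ ↦ (exp_pos _).le)]
      exact mul_le_mul_of_nonneg_left (hmgf t v) (exp_pos _).le
  refine ⟨fun t ↦ ?_, fun t ↦ ?_⟩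
  · exact (integrable_map_measure (hHm t).aestronglyMeasurable hVZm.aemeasurable).mp
      (hmap ▸ hint t)
  · calc mgf (fun ω ↦ a (V ω) + f (V ω) (Z ω)) P t
        = ∫ p, H t p ∂(P.map fun ω ↦ (V ω, Z ω)) :=
          (integral_map hVZm.aemeasurable (hHm t).aestronglyMeasurable).symm
      _ = ∫ v, exp (t * a v) * mgf (f v) η t ∂ρ := by
          rw [hmap, integral_prod _ (hint t)]
          simp_rw [hH, integral_const_mul, mgf]
      _ ≤ ∫ v, exp (t * a v) * exp (cf * t ^ 2 / 2) ∂ρ :=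
          integral_mono_of_nonneg
            (Filter.Eventually.of_forall fun v ↦ mul_nonneg (exp_pos _).le (mgf_nonneg))
            ((hAV t).mul_const _)
            (Filter.Eventually.of_forall fun v ↦
              mul_le_mul_of_nonneg_left (hmgf t v) (exp_pos _).le)
      _ = mgf (fun ω ↦ a (V ω)) P t * exp (cf * t ^ 2 / 2) := by
          rw [integral_mul_const, mgf, integral_map hV.aemeasurable (by fun_prop)]
      _ ≤ exp (ca * t ^ 2 / 2) * exp (cf * t ^ 2 / 2) := by
          gcongr
          exact hA.mgf_le t
      _ = exp ((ca + cf : ℝ≥0) * t ^ 2 / 2) := by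
          rw [← exp_add]
          push_cast
          ring_nf

end IndepStep

lemma abs_integral_integral_le {α β : Type*} [MeasurableSpace α] [MeasurableSpace β]
    {μ : Measure α} {ν : Measure β} [IsProbabilityMeasure μ] [IsProbabilityMeasure ν]
    {F : α → β → ℝ} {κ : ℝ} (hκ : ∀ᵐ a ∂μ, ∀ b, |F a b| ≤ κ) :
    |∫ a, ∫ b, F a b ∂ν ∂μ| ≤ κ := by
  have hinner : ∀ᵐ a ∂μ, ‖∫ b, F a b ∂ν‖ ≤ κ := hκ.mono fun a ha ↦ by
    simpa using norm_integral_le_of_norm_le_const (μ := ν) (f := F a) (.of_forall ha)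
  simpa using norm_integral_le_of_norm_le_const hinner

section Tail

variable {Ω : Type*} {mΩ : MeasurableSpace Ω} {P : Measure Ω} {X : Ω → ℝ} {c : ℝ≥0}

lemma hasSubgaussianMGF_of_abs_le_of_integral_eq_zero [IsProbabilityMeasure P] {b : ℝ}
    (hm : AEMeasurable X P) (hb : ∀ᵐ ω ∂P, |X ω| ≤ b) (h0 : P[X] = 0) :
    HasSubgaussianMGF X (‖b‖₊ ^ 2) P := by
  have h := hasSubgaussianMGF_of_mem_Icc_of_integral_eq_zero hm
    (hb.mono fun ω hω ↦ Set.mem_Icc.mpr (abs_le.mp hω)) h0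
  have hpar : ‖b - -b‖₊ / 2 = ‖b‖₊ := by
    rw [← NNReal.coe_inj]
    push_cast
    rw [sub_neg_eq_add, ← two_mul, norm_mul, Real.norm_two]
    ring
  rwa [hpar] at h

lemma HasSubgaussianMGF.measure_abs_ge_le_s2 [IsFiniteMeasure P] (h : HasSubgaussianMGF X c P)
    {ε : ℝ} (hε : 0 ≤ ε) :
    P {ω | ε ≤ |X ω|} ≤ ENNReal.ofReal (2 * exp (-ε ^ 2 / (2 * c))) := by
  have hupper := h.measure_ge_le hε
  have hlower := h.neg.measure_ge_le hε
  calc P {ω | ε ≤ |X ω|} ≤ P {ω | ε ≤ X ω} + P {ω | ε ≤ (-X) ω} :=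
        (measure_mono fun ω (hω : ε ≤ |X ω|) ↦ le_abs.mp hω).trans (measure_union_le _ _)
    _ = ENNReal.ofReal (P.real {ω | ε ≤ X ω} + P.real {ω | ε ≤ (-X) ω}) := by
        rw [ENNReal.ofReal_add measureReal_nonneg measureReal_nonneg, ofReal_measureReal,
          ofReal_measureReal]
    _ ≤ ENNReal.ofReal (2 * exp (-ε ^ 2 / (2 * c))) :=
        ENNReal.ofReal_le_ofReal (by linarith)

lemma one_le_two_mul_exp_neg_div {a b : ℝ} (hb : 0 ≤ b) (h : a ≤ 16 * b) :
    1 ≤ 2 * exp (-a / (32 * b)) := by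
  have hdiv : a / (32 * b) ≤ 1 / 2 := div_le_of_le_mul₀ (by positivity) (by norm_num) (by linarith)
  linarith [add_one_le_exp (-a / (32 * b)), neg_div (32 * b) a]

lemma measure_le_abs_le_of_abs_sub_le [IsFiniteMeasure P] {A M : Ω → ℝ} {n : ℕ} {c C t : ℝ}
    (hM : HasSubgaussianMGF M (n * ‖2 * c‖₊ ^ 2) P) (hAM : ∀ ω, |M ω - A ω| ≤ 2 * C)
    (hC : 0 ≤ C) (hlarge : 4 * C ≤ n * t) :
    P {ω | n * t ≤ |A ω|} ≤ ENNReal.ofReal (2 * exp (-(n * t ^ 2) / (32 * c ^ 2))) := by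
  calc P {ω | n * t ≤ |A ω|} ≤ P {ω | n * t / 2 ≤ |M ω|} := by
        refine measure_mono fun ω (hω : n * t ≤ |A ω|) ↦ ?_
        show n * t / 2 ≤ |M ω|
        linarith [abs_sub_abs_le_abs_sub (A ω) (M ω), abs_sub_comm (A ω) (M ω), hAM ω]
    _ ≤ ENNReal.ofReal (2 * exp (-(n * t / 2) ^ 2 / (2 * ↑(n * ‖2 * c‖₊ ^ 2)))) :=
        hM.measure_abs_ge_le_s2 (by linarith)
    _ = ENNReal.ofReal (2 * exp (-(n * t ^ 2) / (32 * c ^ 2))) := by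
        congr 3
        push_cast
        rw [Real.norm_eq_abs, sq_abs]
        -- for `n = 0` or `c = 0` both exponents are junk divisions by zero, equal to `0`
        rcases eq_or_ne (n : ℝ) 0 with hn | hn
        · simp [hn]
        rcases eq_or_ne c 0 with hc | hc
        · simp [hc]
        field_simp
        ring

end Tail

section RandomWalk

variable {Ω G E : Type*} {mΩ : MeasurableSpace Ω} [mG : MeasurableSpace G] [MeasurableSpace E]
  {P : Measure Ω} {Xs : ℕ → Ω → G}

lemma indepFun_succ_of_measurable_iSup_comap (hXs : ∀ i, Measurable (Xs i))
    (hindep : iIndepFun Xs P) {k : ℕ} {V : Ω → E}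
    (hV : Measurable[⨆ i ∈ Set.Iic k, mG.comap (Xs i)] V) : IndepFun V (Xs (k + 1)) P := by
  have hdisj : Disjoint (Set.Iic k) {k + 1} := by simp
  have h := indep_iSup_of_disjoint (fun i ↦ (hXs i).comap_le)
    ((iIndepFun_iff_iIndep _ _ _).mp hindep) hdisj
  rw [IndepFun_iff_Indep]
  exact indep_of_indep_of_le_left (by simpa using h) hV.comap_le

lemma measurable_iSup_comap_of_le (k : ℕ) {i : ℕ} (hik : i ≤ k) :
    Measurable[⨆ j ∈ Set.Iic k, mG.comap (Xs j)] (Xs i) :=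
  Measurable.of_comap_le (le_biSup (fun j ↦ mG.comap (Xs j)) (Set.mem_Iic.mpr hik))

lemma iSup_comap_mono {i k : ℕ} (hik : i ≤ k) :
    ⨆ j ∈ Set.Iic i, mG.comap (Xs j) ≤ ⨆ j ∈ Set.Iic k, mG.comap (Xs j) :=
  biSup_mono fun _ hj ↦ Set.mem_Iic.mpr ((Set.mem_Iic.mp hj).trans hik)

theorem hasSubgaussianMGF_sum_range_of_iIndepFun [IsProbabilityMeasure P] {μ : Measure G}
    (hXs : ∀ i, Measurable (Xs i)) (hindep : iIndepFun Xs P) (hdist : ∀ i, P.map (Xs i) = μ)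
    {Y : ℕ → Ω → E} (hY : ∀ k, Measurable[⨆ i ∈ Set.Iic k, mG.comap (Xs i)] (Y k))
    {f : G → E → ℝ} (hf : Measurable (Function.uncurry f)) {c : ℝ≥0}
    (hfc : ∀ y, HasSubgaussianMGF (fun g ↦ f g y) c μ) (n : ℕ) :
    HasSubgaussianMGF (fun ω ↦ ∑ i ∈ Finset.range n, f (Xs (i + 1) ω) (Y i ω)) (n * c) P := by
  induction n with
  | zero => simp [HasSubgaussianMGF.fun_zero]
  | succ k ih =>
    set M := fun ω ↦ ∑ i ∈ Finset.range k, f (Xs (i + 1) ω) (Y i ω)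
    have hM : Measurable[⨆ i ∈ Set.Iic k, mG.comap (Xs i)] M := by
      refine Finset.measurable_sum _ fun i hi ↦ ?_
      have hik : i + 1 ≤ k := Finset.mem_range.mp hi
      exact hf.comp ((measurable_iSup_comap_of_le k hik).prodMk
        ((hY i).mono (iSup_comap_mono (by omega)) le_rfl))
    have hV := hM.prodMk (hY k)
    have hstep := HasSubgaussianMGF.add_comp_of_indepFun (a := Prod.fst)
      (f := fun p g ↦ f g p.2) (hV.mono (iSup₂_le fun i _ ↦ (hXs i).comap_le) le_rfl)
      (hXs (k + 1)) (indepFun_succ_of_measurable_iSup_comap hXs hindep hV) measurable_fst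
      (hf.comp (measurable_snd.prodMk measurable_fst.snd)) ih (fun p ↦ hdist (k + 1) ▸ hfc p.2)
    convert hstep using 1
    · simp only [Finset.sum_range_succ, M]
    · push_cast
      ring

end RandomWalk

end ProbabilityTheory

section Cocycle

variable {G X : Type*} [Group G] [MulAction G X] {σ : G → X → ℝ}

def IsAddCocycle (σ : G → X → ℝ) : Prop :=
  ∀ g₁ g₂ : G, ∀ x : X, σ (g₁ * g₂) x = σ g₁ (g₂ • x) + σ g₂ x

lemma IsAddCocycle.map_one (hcocycle : IsAddCocycle σ) (x : X) : σ 1 x = 0 := by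
  have h := hcocycle 1 1 x
  rw [one_mul, one_smul] at h
  linarith

lemma IsAddCocycle.walk_eq_sum (hcocycle : IsAddCocycle σ)
    {g L : ℕ → G} (hL0 : L 0 = 1) (hLrec : ∀ n, L (n + 1) = g (n + 1) * L n) (x : X) (n : ℕ) :
    σ (L n) x = ∑ i ∈ Finset.range n, σ (g (i + 1)) (L i • x) := by
  induction n with
  | zero => simp [hL0, hcocycle.map_one]
  | succ n ih => rw [hLrec, hcocycle, Finset.sum_range_succ, ih, add_comm]

lemma IsAddCocycle.abs_walk_sub_le (hcocycle : IsAddCocycle σ)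
    {g L : ℕ → G} (hL0 : L 0 = 1) (hLrec : ∀ n, L (n + 1) = g (n + 1) * L n) {κ ℓ : ℝ}
    (hg : ∀ i, ∀ y, |σ (g i) y| ≤ κ) (hℓ : |ℓ| ≤ κ) (x : X) (n : ℕ) :
    |σ (L n) x - n * ℓ| ≤ n * (2 * κ) := by
  have hsum : σ (L n) x - n * ℓ = ∑ i ∈ Finset.range n, (σ (g (i + 1)) (L i • x) - ℓ) := by
    simp [Finset.sum_sub_distrib, hcocycle.walk_eq_sum hL0 hLrec]
  calc |σ (L n) x - n * ℓ| ≤ ∑ i ∈ Finset.range n, |σ (g (i + 1)) (L i • x) - ℓ| :=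
        hsum ▸ Finset.abs_sum_le_sum_abs _ _
    _ ≤ ∑ i ∈ Finset.range n, 2 * κ := Finset.sum_le_sum fun i _ ↦ by
        linarith [abs_sub (σ (g (i + 1)) (L i • x)) ℓ, hg (i + 1) (L i • x)]
    _ = n * (2 * κ) := by simp

def martingaleIncrement (σ : G → X → ℝ) (ψ : X → ℝ) (ℓ : ℝ) (g : G) (y : X) : ℝ :=
  σ g y - ℓ + (ψ (g • y) - ψ y)

lemma IsAddCocycle.sum_martingaleIncrement_walk (hcocycle : IsAddCocycle σ)
    {g L : ℕ → G} (hL0 : L 0 = 1) (hLrec : ∀ n, L (n + 1) = g (n + 1) * L n)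
    (ψ : X → ℝ) (ℓ : ℝ) (x : X) (n : ℕ) :
    ∑ i ∈ Finset.range n, martingaleIncrement σ ψ ℓ (g (i + 1)) (L i • x) =
      σ (L n) x - n * ℓ + (ψ (L n • x) - ψ x) := by
  have hψ := Finset.sum_range_sub (fun i ↦ ψ (L i • x)) n
  simp only [hLrec, mul_smul, hL0, one_smul] at hψ
  simp [martingaleIncrement, Finset.sum_add_distrib, Finset.sum_sub_distrib, hψ,
    hcocycle.walk_eq_sum hL0 hLrec]

lemma abs_martingaleIncrement_le {ψ : X → ℝ} {ℓ κ C : ℝ} {g : G} (hg : ∀ y, |σ g y| ≤ κ)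
    (hℓ : |ℓ| ≤ κ) (hψ : ∀ y, |ψ y| ≤ C) (y : X) :
    |martingaleIncrement σ ψ ℓ g y| ≤ 2 * (κ + C) := by
  obtain ⟨hσ₁, hσ₂⟩ := abs_le.mp (hg y)
  obtain ⟨hℓ₁, hℓ₂⟩ := abs_le.mp hℓ
  obtain ⟨hψ₁, hψ₂⟩ := abs_le.mp (hψ (g • y))
  obtain ⟨hψ₃, hψ₄⟩ := abs_le.mp (hψ y)
  rw [martingaleIncrement, abs_le]
  constructor <;> linarith

lemma IsAddCocycle.ae_abs_walk_sub_le (hcocycle : IsAddCocycle σ)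
    [MeasurableSpace G] {μ : Measure G} {κ : ℝ} (hκ : ∀ᵐ g ∂μ, ∀ y, |σ g y| ≤ κ) {ℓ : ℝ}
    (hℓ : |ℓ| ≤ κ) {Ω : Type*} {mΩ : MeasurableSpace Ω} {P : Measure Ω}
    {Xs L : ℕ → Ω → G} (hXs : ∀ i, Measurable (Xs i)) (hdist : ∀ i, P.map (Xs i) = μ)
    (hL0 : ∀ ω, L 0 ω = 1) (hLrec : ∀ n ω, L (n + 1) ω = Xs (n + 1) ω * L n ω) (x : X) (n : ℕ) :
    ∀ᵐ ω ∂P, |σ (L n ω) x - n * ℓ| ≤ n * (2 * κ) := by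
  have hXκ : ∀ᵐ ω ∂P, ∀ i, ∀ y, |σ (Xs i ω) y| ≤ κ :=
    ae_all_iff.mpr fun i ↦ ae_of_ae_map (hXs i).aemeasurable ((hdist i).symm ▸ hκ)
  exact hXκ.mono fun ω hω ↦ hcocycle.abs_walk_sub_le (g := (Xs · ω)) (L := (L · ω))
    (hL0 ω) (hLrec · ω) hω hℓ x n

end Cocycle

section MeasurableCocycle

variable {G X : Type*} [Group G] [mG : MeasurableSpace G] [MulAction G X] [MeasurableSpace X]
  {σ : G → X → ℝ} {μ : Measure G} [IsProbabilityMeasure μ] {κ : ℝ}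

lemma measurable_martingaleIncrement (hact : Measurable fun p : G × X ↦ p.1 • p.2)
    (hσ : Measurable fun p : G × X ↦ σ p.1 p.2) {ψ : X → ℝ} (hψ : Measurable ψ) {ℓ : ℝ} :
    Measurable (Function.uncurry (martingaleIncrement σ ψ ℓ)) :=
  (hσ.sub measurable_const).add ((hψ.comp hact).sub (hψ.comp measurable_snd))

lemma integral_martingaleIncrement_eq_zero (hact : Measurable fun p : G × X ↦ p.1 • p.2)
    (hσ : Measurable fun p : G × X ↦ σ p.1 p.2) (hκ : ∀ᵐ g ∂μ, ∀ y, |σ g y| ≤ κ) {ψ : X → ℝ}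
    (hψ : Measurable ψ) {C : ℝ} (hψb : ∀ y, |ψ y| ≤ C) {ℓ : ℝ} {y : X}
    (hPoisson : ψ y - ∫ g, ψ (g • y) ∂μ = (∫ g, σ g y ∂μ) - ℓ) :
    ∫ g, martingaleIncrement σ ψ ℓ g y ∂μ = 0 := by
  have hσy : Integrable (fun g ↦ σ g y) μ :=
    (integrable_const κ).mono'
      (hσ.comp (measurable_id.prodMk measurable_const)).aestronglyMeasurable
      (hκ.mono fun g hg ↦ hg y)
  have hψy : Integrable (fun g ↦ ψ (g • y)) μ :=
    (integrable_const C).mono'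
      (hψ.comp (hact.comp (measurable_id.prodMk measurable_const))).aestronglyMeasurable
      (.of_forall fun g ↦ hψb _)
  simp only [martingaleIncrement]
  rw [integral_add (f := fun g ↦ σ g y - ℓ) (g := fun g ↦ ψ (g • y) - ψ y)
      (hσy.sub (integrable_const ℓ)) (hψy.sub (integrable_const (ψ y))),
    integral_sub hσy (integrable_const ℓ), integral_sub hψy (integrable_const _)]
  simp only [integral_const, probReal_univ, one_smul]
  linarith

lemma hasSubgaussianMGF_martingaleIncrement (hact : Measurable fun p : G × X ↦ p.1 • p.2)
    (hσ : Measurable fun p : G × X ↦ σ p.1 p.2) (hκ : ∀ᵐ g ∂μ, ∀ y, |σ g y| ≤ κ) {ℓ : ℝ}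
    (hℓ : |ℓ| ≤ κ) {ψ : X → ℝ} (hψ : Measurable ψ) {C : ℝ} (hψb : ∀ y, |ψ y| ≤ C) {y : X}
    (hPoisson : ψ y - ∫ g, ψ (g • y) ∂μ = (∫ g, σ g y ∂μ) - ℓ) :
    HasSubgaussianMGF (martingaleIncrement σ ψ ℓ · y) (‖2 * (κ + C)‖₊ ^ 2) μ :=
  hasSubgaussianMGF_of_abs_le_of_integral_eq_zero
    ((measurable_martingaleIncrement hact hσ hψ).comp
      (measurable_id.prodMk measurable_const)).aemeasurable
    (hκ.mono fun _ hg ↦ abs_martingaleIncrement_le hg hℓ hψb y)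
    (integral_martingaleIncrement_eq_zero hact hσ hκ hψ hψb hPoisson)

lemma measurable_walk_smul {Ω : Type*}
    (hact : Measurable fun p : G × X ↦ p.1 • p.2) {Xs L : ℕ → Ω → G}
    (hL0 : ∀ ω, L 0 ω = 1) (hLrec : ∀ n ω, L (n + 1) ω = Xs (n + 1) ω * L n ω) (x : X) (k : ℕ) :
    Measurable[⨆ i ∈ Set.Iic k, mG.comap (Xs i)] fun ω ↦ L k ω • x := by
  induction k with
  | zero => simp only [hL0, one_smul, measurable_const]
  | succ k ih =>
    simp only [hLrec, mul_smul]
    exact hact.comp ((measurable_iSup_comap_of_le (k + 1) le_rfl).prodMk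
      (ih.mono (iSup_comap_mono k.le_succ) le_rfl))

theorem IsAddCocycle.hasSubgaussianMGF_walk (hcocycle : IsAddCocycle σ)
    (hact : Measurable fun p : G × X ↦ p.1 • p.2) (hσ : Measurable fun p : G × X ↦ σ p.1 p.2)
    (hκ : ∀ᵐ g ∂μ, ∀ y, |σ g y| ≤ κ) {ℓ : ℝ} (hℓ : |ℓ| ≤ κ) {ψ : X → ℝ} (hψ : Measurable ψ)
    {C : ℝ} (hψb : ∀ y, |ψ y| ≤ C)
    (hPoisson : ∀ y, ψ y - ∫ g, ψ (g • y) ∂μ = (∫ g, σ g y ∂μ) - ℓ)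
    {Ω : Type*} {mΩ : MeasurableSpace Ω} {P : Measure Ω} [IsProbabilityMeasure P]
    {Xs L : ℕ → Ω → G} (hXs : ∀ i, Measurable (Xs i)) (hindep : iIndepFun Xs P)
    (hdist : ∀ i, P.map (Xs i) = μ) (hL0 : ∀ ω, L 0 ω = 1)
    (hLrec : ∀ n ω, L (n + 1) ω = Xs (n + 1) ω * L n ω) (x : X) (n : ℕ) :
    HasSubgaussianMGF (fun ω ↦ σ (L n ω) x - n * ℓ + (ψ (L n ω • x) - ψ x))
      (n * ‖2 * (κ + C)‖₊ ^ 2) P := by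
  have h := hasSubgaussianMGF_sum_range_of_iIndepFun hXs hindep hdist
    (measurable_walk_smul hact hL0 hLrec x) (measurable_martingaleIncrement hact hσ hψ)
    (fun _ ↦ hasSubgaussianMGF_martingaleIncrement hact hσ hκ hℓ hψ hψb (hPoisson _)) n
  have hsum (ω : Ω) := hcocycle.sum_martingaleIncrement_walk (g := (Xs · ω)) (L := (L · ω))
    (hL0 ω) (hLrec · ω) ψ ℓ x n
  simpa only [hsum] using h

end MeasurableCocycle

theorem cocycle_concentration_general
    {G : Type*} [Group G] [MeasurableSpace G]
    {X : Type*} [MeasurableSpace X] [MulAction G X]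
    (hact : Measurable fun p : G × X => p.1 • p.2)
    (σ : G → X → ℝ) (hσ : Measurable fun p : G × X => σ p.1 p.2)
    (hcocycle : ∀ g₁ g₂ : G, ∀ x : X, σ (g₁ * g₂) x = σ g₁ (g₂ • x) + σ g₂ x)
    (μ : Measure G) [IsProbabilityMeasure μ] (S : Set G) (hS : μ Sᶜ = 0)
    (κS : ℝ) (hκS : ∀ g ∈ S, ∀ x : X, |σ g x| ≤ κS)
    (ν : Measure X) [IsProbabilityMeasure ν]
    (ℓ : ℝ) (hℓ : ℓ = ∫ g, ∫ x, σ g x ∂ν ∂μ)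
    (ψ : X → ℝ) (hψ : Measurable ψ) (Cψ : ℝ) (hψb : ∀ x, |ψ x| ≤ Cψ)
    (hPoisson : ∀ x : X, ψ x - ∫ g, ψ (g • x) ∂μ = (∫ g, σ g x ∂μ) - ℓ)
    {Ω : Type*} {mΩ : MeasurableSpace Ω} (Pr : Measure Ω) [IsProbabilityMeasure Pr]
    (Xs : ℕ → Ω → G) (hXmeas : ∀ i, Measurable (Xs i))
    (hindep : iIndepFun Xs Pr)
    (hdist : ∀ i, Pr.map (Xs i) = μ)
    (L : ℕ → Ω → G) (hL0 : ∀ ω, L 0 ω = 1)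
    (hLrec : ∀ (n : ℕ) (ω : Ω), L (n + 1) ω = Xs (n + 1) ω * L n ω)
    (t : ℝ) (ht : 0 < t) (n : ℕ) (x : X) :
    Pr {ω | (n : ℝ) * t ≤ |σ (L n ω) x - n * ℓ|} ≤
      ENNReal.ofReal (2 * Real.exp (-((n : ℝ) * t ^ 2) / (32 * (κS + Cψ) ^ 2))) := by
  have hκ : ∀ᵐ g ∂μ, ∀ y, |σ g y| ≤ κS := (show ∀ᵐ g ∂μ, g ∈ S from mem_ae_iff.mpr hS).mono hκS
  have hℓκ : |ℓ| ≤ κS := hℓ ▸ abs_integral_integral_le hκ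
  have hC0 : 0 ≤ Cψ := (abs_nonneg _).trans (hψb x)
  by_cases hlarge : 4 * Cψ ≤ n * t
  · refine measure_le_abs_le_of_abs_sub_le (IsAddCocycle.hasSubgaussianMGF_walk hcocycle hact hσ
      hκ hℓκ hψ hψb hPoisson hXmeas hindep hdist hL0 hLrec x n) (fun ω ↦ ?_) hC0 hlarge
    rw [add_sub_cancel_left]
    exact (abs_sub _ _).trans (by linarith [hψb (L n ω • x), hψb x])
  by_cases hsmall : n = 0 ∨ t ≤ 2 * κS
  · refine prob_le_one.trans
      (ENNReal.one_le_ofReal.mpr (one_le_two_mul_exp_neg_div (sq_nonneg _) ?_))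
    rcases hsmall with rfl | hsmall
    · simp [sq_nonneg]
    have hκ0 : 0 ≤ κS := (abs_nonneg _).trans hℓκ
    nlinarith [sq_nonneg (κS - Cψ), mul_le_mul_of_nonneg_left hsmall (by positivity : 0 ≤ n * t)]
  simp only [not_or, not_le] at hsmall
  have hlt : (n : ℝ) * (2 * κS) < n * t :=
    mul_lt_mul_of_pos_left hsmall.2 (by exact_mod_cast Nat.pos_of_ne_zero hsmall.1)
  have hnull : Pr {ω | (n : ℝ) * t ≤ |σ (L n ω) x - n * ℓ|} = 0 :=
    measure_eq_zero_iff_ae_notMem.mpr <|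
      (IsAddCocycle.ae_abs_walk_sub_le hcocycle hκ hℓκ hXmeas hdist hL0 hLrec x n).mono fun ω hω ↦
        not_le.mpr (hω.trans_lt hlt)
  exact hnull.trans_le zero_le

/-- Let `G` be a group acting measurably on a space `X`, `σ : G × X → ℝ`
an additive cocycle bounded by `κS` on `S × X`, where `S` carries full `μ`-measure
(`S` is the support of `μ`). Let `ν` be a `μ`-stationary probability measure on `X` and
`ℓ(μ) = ∬ σ dμ dν`. If a bounded measurable `ψ` (with `‖ψ‖_∞ ≤ Cψ`) solves the Poisson
equation `ψ(x) - ∫ ψ(g x) dμ(g) = ∫ σ(g,x) dμ(g) - ℓ(μ)`, then for every `t > 0`, `n` and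
`x`, `P(|σ(L_n, x) - n ℓ(μ)| ≥ n t) ≤ 2 exp(- n t²/(32 (κS + Cψ)²))`, where
`L_n = X_n ⋯ X_1` is the left random walk of i.i.d. increments of law `μ`. -/
theorem cocycle_concentration
    {G : Type*} [Group G] [MeasurableSpace G]
    {X : Type*} [MeasurableSpace X] [MulAction G X]
    (hact : Measurable fun p : G × X => p.1 • p.2)
    (σ : G → X → ℝ) (hσ : Measurable fun p : G × X => σ p.1 p.2)
    (hcocycle : ∀ g₁ g₂ : G, ∀ x : X, σ (g₁ * g₂) x = σ g₁ (g₂ • x) + σ g₂ x)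
    (μ : Measure G) [IsProbabilityMeasure μ] (S : Set G) (hS : μ Sᶜ = 0)
    (κS : ℝ) (hκS : ∀ g ∈ S, ∀ x : X, |σ g x| ≤ κS)
    (ν : Measure X) [IsProbabilityMeasure ν]
    (hstat : (μ.prod ν).map (fun p : G × X => p.1 • p.2) = ν)
    (ℓ : ℝ) (hℓ : ℓ = ∫ g, ∫ x, σ g x ∂ν ∂μ)
    (ψ : X → ℝ) (hψ : Measurable ψ) (Cψ : ℝ) (hψb : ∀ x, |ψ x| ≤ Cψ)
    (hPoisson : ∀ x : X, ψ x - ∫ g, ψ (g • x) ∂μ = (∫ g, σ g x ∂μ) - ℓ)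
    {Ω : Type*} {mΩ : MeasurableSpace Ω} (Pr : Measure Ω) [IsProbabilityMeasure Pr]
    (Xs : ℕ → Ω → G) (hXmeas : ∀ i, Measurable (Xs i))
    (hindep : iIndepFun Xs Pr)
    (hdist : ∀ i, Pr.map (Xs i) = μ)
    (L : ℕ → Ω → G) (hL0 : ∀ ω, L 0 ω = 1)
    (hLrec : ∀ (n : ℕ) (ω : Ω), L (n + 1) ω = Xs (n + 1) ω * L n ω)
    (t : ℝ) (ht : 0 < t) (n : ℕ) (x : X) :
    Pr {ω | (n : ℝ) * t ≤ |σ (L n ω) x - n * ℓ|} ≤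
      ENNReal.ofReal (2 * Real.exp (-((n : ℝ) * t ^ 2) / (32 * (κS + Cψ) ^ 2))) :=
  cocycle_concentration_general hact σ hσ hcocycle μ S hS κS hκS ν ℓ hℓ ψ hψ Cψ hψb hPoisson
    (mΩ := mΩ) Pr Xs hXmeas hindep hdist L hL0 hLrec t ht n x
end

section
/- Let (M,d) be a metric space with basepoint o, and let γ ∈ Isom(M). For every constant C ≥ 0, the image under γ of the complement of the shadow O_C(o, γ⁻¹·o) is contained in the shadow O_{κ(γ)-C}(o, γ·o), where κ(γ) = d(γo, o). -/
/-- The Gromov product `(x|y)_o = (d(x,o) + d(y,o) - d(x,y))/2`. -/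
noncomputable def gromovProd {M : Type*} [MetricSpace M] (o x y : M) : ℝ :=
  (dist x o + dist y o - dist x y) / 2

/-- The shadow `O_C(x,y) = {z ∈ M : (z|y)_x ≥ d(x,y) - C}`. -/
def shadow {M : Type*} [MetricSpace M] (C : ℝ) (x y : M) : Set M :=
  {z | dist x y - C ≤ gromovProd x z y}

/-- For an isometry `γ` of a metric space `M` with basepoint `o` and any
`C ≥ 0`, the image under `γ` of the complement of the shadow `O_C(o, γ⁻¹·o)` is contained in
the shadow `O_{κ(γ)-C}(o, γ·o)`, where `κ(γ) = d(γ o, o)`. -/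
theorem image_compl_shadow_subset {M : Type*} [MetricSpace M] (o : M) (γ : M ≃ᵢ M)
    (C : ℝ) (hC : 0 ≤ C) :
    γ '' (shadow C o (γ.symm o))ᶜ ⊆ shadow (dist (γ o) o - C) o (γ o) := by
  rintro z ⟨w, hw, rfl⟩
  simp only [shadow, gromovProd, Set.mem_compl_iff, Set.mem_setOf_eq, not_le] at hw ⊢
  have h1 : dist w (γ.symm o) = dist (γ w) o := by
    rw [← γ.dist_eq w (γ.symm o), γ.apply_symm_apply]
  have h2 : dist (γ.symm o) o = dist o (γ o) := by
    rw [← γ.dist_eq (γ.symm o) o, γ.apply_symm_apply, dist_comm]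
  have h3 : dist (γ w) (γ o) = dist w o := γ.dist_eq w o
  have h4 : dist o (γ.symm o) = dist (γ o) o := by rw [dist_comm, h2, dist_comm]
  rw [h1, h2] at hw
  rw [h4] at hw
  rw [h3]
  rw [dist_comm o (γ o)] at hw ⊢
  linarith
end

section
/- Let (M,d) be a δ-hyperbolic space with basepoint o, and γ₁, γ₂ ∈ Isom(M). Suppose there is D > 0 such that: (i) (γ_i^{ε₁}·o | γ_j^{ε₂}·o)_o ≤ D for all i ≠ j in {1,2} and ε₁, ε₂ ∈ {±1}; (ii) (γ_i·o | γ_i⁻¹·o)_o ≤ D for i = 1,2; (iii) 0 < (1/2) max(κ(γ₁), κ(γ₂)) < min(κ(γ₁), κ(γ₂)) - D - δ. Then the subgroup ⟨γ₁, γ₂⟩ of Isom(M) is a non-abelian free group of rank two. -/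
open Pointwise

universe u v

-- `FreeGroup.injective_lift_of_ping_pong` with `ι` and `G` in independent universes.
theorem FreeGroup.injective_lift_of_ping_pong' {ι : Type u} [Nontrivial ι] {G : Type v}
    [Group G] (a : ι → G) {α : Type*} [MulAction G α] (X Y : ι → Set α)
    (hXnonempty : ∀ i, (X i).Nonempty) (hXdisj : Pairwise (Function.onFun Disjoint X))
    (hYdisj : Pairwise (Function.onFun Disjoint Y)) (h_pos_negdisj : ∀ i j, Disjoint (X i) (Y j))
    (hX : ∀ i, a i • (Y i)ᶜ ⊆ X i) (hY : ∀ i, a⁻¹ i • (X i)ᶜ ⊆ Y i) :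
    Function.Injective (FreeGroup.lift a) := by
  let a' : ULift.{v} ι → ULift.{u} G := fun i => ULift.up (a i.down)
  have ha' : Function.Injective (FreeGroup.lift a') :=
    FreeGroup.injective_lift_of_ping_pong a' (X ∘ ULift.down) (Y ∘ ULift.down)
      (fun i => hXnonempty i.down) (fun i j hij => hXdisj (ULift.down_injective.ne hij))
      (fun i j hij => hYdisj (ULift.down_injective.ne hij)) (fun i j => h_pos_negdisj i.down j.down)
      (fun i => hX i.down) (fun i => hY i.down)
  have hlift : FreeGroup.lift a = (MulEquiv.ulift.toMonoidHom.comp (FreeGroup.lift a')).comp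
      (FreeGroup.freeGroupCongr Equiv.ulift.symm).toMonoidHom :=
    FreeGroup.ext_hom _ _ fun _ => rfl
  rw [hlift]
  exact MulEquiv.ulift.injective.comp (ha'.comp (MulEquiv.injective _))

namespace IsometryEquiv

variable {α : Type*} [PseudoEMetricSpace α]

instance applyMulAction : MulAction (α ≃ᵢ α) α where
  smul e x := e x
  one_smul _ := rfl
  mul_smul _ _ _ := rfl

@[simp]
theorem smul_def (e : α ≃ᵢ α) (x : α) : e • x = e x := rfl

instance : IsIsometricSMul (α ≃ᵢ α) α := ⟨fun e => e.isometry⟩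

end IsometryEquiv

theorem dist_inv_smul_eq_dist_smul {G X : Type*} [Group G] [PseudoMetricSpace X] [MulAction G X]
    [IsIsometricSMul G X] (g : G) (x : X) : dist (g⁻¹ • x) x = dist (g • x) x := by
  rw [← dist_smul g, smul_inv_smul, dist_comm]

section GromovProduct

variable {M : Type*} [MetricSpace M]

theorem gromovProd_comm (o x y : M) : gromovProd o x y = gromovProd o y x := by
  simp only [gromovProd, dist_comm x y]
  ring

theorem gromovProd_self (o x : M) : gromovProd o x x = dist x o := by
  simp [gromovProd]

theorem gromovProd_add_gromovProd_swap (o p x : M) :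
    gromovProd o x p + gromovProd p x o = dist p o := by
  simp only [gromovProd, dist_comm o p]
  ring

theorem gromovProd_smul {G : Type*} [SMul G M] [IsIsometricSMul G M] (g : G) (p x y : M) :
    gromovProd (g • p) (g • x) (g • y) = gromovProd p x y := by
  simp only [gromovProd, dist_smul]

theorem gromovProd_smul_smul_self {G : Type*} [Group G] [MulAction G M] [IsIsometricSMul G M]
    (g : G) (o y : M) :
    gromovProd o (g • y) (g • o) = dist (g • o) o - gromovProd o y (g⁻¹ • o) := by
  have h := gromovProd_add_gromovProd_swap o (g • o) (g • y)
  have h' : gromovProd (g • o) (g • y) o = gromovProd o y (g⁻¹ • o) := by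
    rw [← gromovProd_smul g o y, smul_inv_smul]
  linarith

end GromovProduct

def IsGromovHyperbolic (M : Type*) [MetricSpace M] (δ : ℝ) : Prop :=
  ∀ p x y z : M, min (gromovProd p x z) (gromovProd p z y) - δ ≤ gromovProd p x y

section Shadow

variable {M : Type*} [MetricSpace M]

def gromovShadow (o x : M) (C : ℝ) : Set M := {y | C < gromovProd o y x}

theorem mem_gromovShadow_self {o x : M} {C : ℝ} (h : C < dist x o) : x ∈ gromovShadow o x C := by
  rwa [gromovShadow, Set.mem_ofPred_eq, gromovProd_self]

theorem IsGromovHyperbolic.disjoint_gromovShadow {δ D : ℝ} (hM : IsGromovHyperbolic M δ)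
    {o x y : M} (h : gromovProd o x y ≤ D) :
    Disjoint (gromovShadow o x (D + δ)) (gromovShadow o y (D + δ)) := by
  refine Set.disjoint_left.2 fun z hzx hzy => ?_
  have := hM o x y z
  rw [gromovShadow, Set.mem_ofPred_eq, gromovProd_comm] at hzx
  have : D + δ < min (gromovProd o x z) (gromovProd o z y) := lt_min hzx hzy
  linarith

theorem smul_compl_gromovShadow_subset {G : Type*} [Group G] [MulAction G M]
    [IsIsometricSMul G M] {g : G} {o : M} {C : ℝ} (h : 2 * C < dist (g • o) o) :
    g • (gromovShadow o (g⁻¹ • o) C)ᶜ ⊆ gromovShadow o (g • o) C := by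
  rintro _ ⟨y, hy, rfl⟩
  simp only [gromovShadow, Set.mem_compl_iff, Set.mem_ofPred_eq, not_lt] at hy ⊢
  rw [gromovProd_smul_smul_self]
  linarith

end Shadow

theorem IsGromovHyperbolic.injective_freeGroupLift {M : Type*} [MetricSpace M] {δ D : ℝ}
    (hM : IsGromovHyperbolic M δ) {ι G : Type*} [Nontrivial ι] [Group G] [MulAction G M]
    [IsIsometricSMul G M] (o : M) (a : ι → G)
    (h_pos_pos : Pairwise fun i j => gromovProd o (a i • o) (a j • o) ≤ D)
    (h_neg_neg : Pairwise fun i j => gromovProd o ((a i)⁻¹ • o) ((a j)⁻¹ • o) ≤ D)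
    (h_pos_neg : ∀ i j, gromovProd o (a i • o) ((a j)⁻¹ • o) ≤ D)
    (hκ : ∀ i, 2 * (D + δ) < dist (a i • o) o) :
    Function.Injective (FreeGroup.lift a) := by
  have hκ_inv (i : ι) : 2 * (D + δ) < dist ((a i)⁻¹ • o) o := by
    rw [dist_inv_smul_eq_dist_smul]
    exact hκ i
  refine FreeGroup.injective_lift_of_ping_pong' a
    (fun i => gromovShadow o (a i • o) (D + δ)) (fun i => gromovShadow o ((a i)⁻¹ • o) (D + δ))
    (fun i => ⟨_, mem_gromovShadow_self (by linarith [hκ i, dist_nonneg (x := a i • o) (y := o)])⟩)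
    (fun i j hij => hM.disjoint_gromovShadow (h_pos_pos hij))
    (fun i j hij => hM.disjoint_gromovShadow (h_neg_neg hij))
    (fun i j => hM.disjoint_gromovShadow (h_pos_neg i j))
    (fun i => ?_) (fun i => ?_)
  · simpa only [inv_inv] using smul_compl_gromovShadow_subset (hκ i)
  · simpa only [Pi.inv_apply, inv_inv] using smul_compl_gromovShadow_subset (hκ_inv i)

theorem ping_pong_free_general {M : Type*} [MetricSpace M] (δ : ℝ)
    (hδ : ∀ p x y z : M, min (gromovProd p x z) (gromovProd p z y) - δ ≤ gromovProd p x y)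
    (o : M) (γ₁ γ₂ : M ≃ᵢ M) (D : ℝ)
    (h1 : ∀ ε₁ ε₂ : ℤ, (ε₁ = 1 ∨ ε₁ = -1) → (ε₂ = 1 ∨ ε₂ = -1) →
      gromovProd o ((γ₁ ^ ε₁) o) ((γ₂ ^ ε₂) o) ≤ D)
    (h2 : gromovProd o (γ₁ o) (γ₁⁻¹ o) ≤ D ∧ gromovProd o (γ₂ o) (γ₂⁻¹ o) ≤ D)
    (h3 : 0 < (1 / 2) * max (dist (γ₁ o) o) (dist (γ₂ o) o) ∧
      (1 / 2) * max (dist (γ₁ o) o) (dist (γ₂ o) o)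
        < min (dist (γ₁ o) o) (dist (γ₂ o) o) - D - δ) :
    Function.Injective
      (FreeGroup.lift (fun b : Bool => if b then γ₁ else γ₂) : FreeGroup Bool →* (M ≃ᵢ M)) := by
  have h11 : gromovProd o (γ₁ o) (γ₂ o) ≤ D := by simpa using h1 1 1
  have h12 : gromovProd o (γ₁ o) (γ₂⁻¹ o) ≤ D := by simpa using h1 1 (-1)
  have h21 : gromovProd o (γ₁⁻¹ o) (γ₂ o) ≤ D := by simpa using h1 (-1) 1
  have h22 : gromovProd o (γ₁⁻¹ o) (γ₂⁻¹ o) ≤ D := by simpa using h1 (-1) (-1)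
  have hκ : 2 * (D + δ) < min (dist (γ₁ o) o) (dist (γ₂ o) o) := by
    linarith [h3.2, min_le_max (a := dist (γ₁ o) o) (b := dist (γ₂ o) o)]
  obtain ⟨hinv₁, hinv₂⟩ := h2
  refine IsGromovHyperbolic.injective_freeGroupLift (D := D) hδ o _ ?_ ?_ ?_ ?_
  · rintro (_ | _) (_ | _) hij <;> simp only [Bool.false_eq_true, ↓reduceIte, IsometryEquiv.smul_def]
      <;> first | exact absurd rfl hij | assumption | (rw [gromovProd_comm]; assumption)
  · rintro (_ | _) (_ | _) hij <;> simp only [Bool.false_eq_true, ↓reduceIte, IsometryEquiv.smul_def]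
      <;> first | exact absurd rfl hij | assumption | (rw [gromovProd_comm]; assumption)
  · rintro (_ | _) (_ | _) <;> simp only [Bool.false_eq_true, ↓reduceIte, IsometryEquiv.smul_def]
      <;> first | assumption | (rw [gromovProd_comm]; assumption)
  · rintro (_ | _)
    · exact hκ.trans_le (min_le_right _ _)
    · exact hκ.trans_le (min_le_left _ _)

/-- **ping-pong.** Let `M` be a `δ`-hyperbolic space with basepoint `o` and
`γ₁, γ₂` isometries of `M`. If there is `D > 0` such that
(i) `(γ_i^{ε₁}·o | γ_j^{ε₂}·o)_o ≤ D` for `i ≠ j` and `ε₁, ε₂ ∈ {±1}`,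
(ii) `(γ_i·o | γ_i⁻¹·o)_o ≤ D` for `i = 1, 2`, and
(iii) `0 < ½ max(κ(γ₁), κ(γ₂)) < min(κ(γ₁), κ(γ₂)) - D - δ` with `κ(γ) = d(γ o, o)`,
then `γ₁` and `γ₂` generate a free (hence non-abelian) group of rank two, i.e. the
canonical homomorphism from the free group on two generators sending the generators to
`γ₁, γ₂` is injective. -/
theorem ping_pong_free {M : Type*} [MetricSpace M] (δ : ℝ)
    (hδ : ∀ p x y z : M, min (gromovProd p x z) (gromovProd p z y) - δ ≤ gromovProd p x y)
    (o : M) (γ₁ γ₂ : M ≃ᵢ M) (D : ℝ) (hD : 0 < D)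
    (h1 : ∀ ε₁ ε₂ : ℤ, (ε₁ = 1 ∨ ε₁ = -1) → (ε₂ = 1 ∨ ε₂ = -1) →
      gromovProd o ((γ₁ ^ ε₁) o) ((γ₂ ^ ε₂) o) ≤ D)
    (h2 : gromovProd o (γ₁ o) (γ₁⁻¹ o) ≤ D ∧ gromovProd o (γ₂ o) (γ₂⁻¹ o) ≤ D)
    (h3 : 0 < (1 / 2) * max (dist (γ₁ o) o) (dist (γ₂ o) o) ∧
      (1 / 2) * max (dist (γ₁ o) o) (dist (γ₂ o) o)
        < min (dist (γ₁ o) o) (dist (γ₂ o) o) - D - δ) :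
    Function.Injective
      (FreeGroup.lift (fun b : Bool => if b then γ₁ else γ₂) : FreeGroup Bool →* (M ≃ᵢ M)) :=
  ping_pong_free_general δ hδ o γ₁ γ₂ D h1 h2 h3
end

section
/- Let M be a metric space, G = Isom(M), o ∈ M, and σ the Busemann cocycle on the horofunction compactification. For every g ∈ G and every x, y in the horofunction compactification such that gx and y do not project to the same point of the Gromov boundary, σ(g, x) = -2(x | g⁻¹y)_o + 2(gx | y)_o + σ(g⁻¹, y). -/
/-- Let `M` be a metric space, `o ∈ M`, `g` an isometry of `M`, and let
`x, y : M → ℝ` be horofunctions (points of the horofunction compactification: pointwise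
limits of functions `m ↦ d(z_n, m) - d(z_n, o)`). Write `g·h` for the action
`(g·h)(m) = h(g⁻¹ m) - h(g⁻¹ o)`, `σ(g, h) = h(g⁻¹ o)` for the Busemann cocycle, and
`(h₁|h₂)_o = -(1/2) inf_m (h₁(m) + h₂(m))` for the extended Gromov product. If `g·x` and `y`
do not project to the same point of the Gromov boundary (equivalently the relevant Gromov
products are finite, i.e., the infima are genuine), then
`σ(g, x) = -2 (x | g⁻¹·y)_o + 2 (g·x | y)_o + σ(g⁻¹, y)`. -/
theorem busemann_cocycle_identity {M : Type*} [MetricSpace M] (o : M) (g : M ≃ᵢ M)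
    (x y : M → ℝ)
    (hx : ∃ zs : ℕ → M, ∀ m : M,
      Filter.Tendsto (fun n => dist (zs n) m - dist (zs n) o) Filter.atTop (nhds (x m)))
    (hy : ∃ zs : ℕ → M, ∀ m : M,
      Filter.Tendsto (fun n => dist (zs n) m - dist (zs n) o) Filter.atTop (nhds (y m)))
    -- finiteness of `(g·x | y)_o`, i.e. `g·x` and `y` project to distinct boundary points:
    (hfin : BddBelow (Set.range fun m : M => x (g.symm m) - x (g.symm o) + y m))
    -- finiteness of `(x | g⁻¹·y)_o`:
    (hfin' : BddBelow (Set.range fun m : M => x m + (y (g m) - y (g o)))) :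
    x (g.symm o) =
      -2 * (-(1 / 2) * sInf (Set.range fun m : M => x m + (y (g m) - y (g o)))) +
        2 * (-(1 / 2) * sInf (Set.range fun m : M => x (g.symm m) - x (g.symm o) + y m)) +
        y (g o) := by
  set c : ℝ := y (g o) - x (g.symm o) with hc
  set S : Set ℝ := Set.range fun m : M => x m + (y (g m) - y (g o)) with hS
  have hrange : (Set.range fun m : M => x (g.symm m) - x (g.symm o) + y m)
      = (fun r => r + c) '' S := by
    ext r
    constructor
    · rintro ⟨m, rfl⟩
      exact ⟨x (g.symm m) + (y (g (g.symm m)) - y (g o)), ⟨g.symm m, rfl⟩, by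
        simp [c]; ring⟩
    · rintro ⟨s, ⟨m, rfl⟩, rfl⟩
      exact ⟨g m, by simp [c]; ring⟩
  have hne : S.Nonempty := ⟨x o + (y (g o) - y (g o)), ⟨o, rfl⟩⟩
  have key : sInf ((fun r => r + c) '' S) = sInf S + c :=
    ((OrderIso.addRight c).map_csInf' hne hfin').symm
  rw [hrange, key]
  ring
end

section
/- Let μ be a probability measure on GL_d(ℂ) with bounded support S whose generated semigroup is strongly irreducible and proximal, κ_S = max{ln‖g‖ ∨ ln‖g⁻¹‖ : g ∈ S}, and 𝔠 the sup over unit vectors x of ∫ ln(‖x‖‖y‖/|⟨x,y⟩|) dν*([y]) where ν* is the unique μ*-stationary measure on P(ℂ^d). Suppose for all t > 0, n ∈ ℕ, and nonzero v: P(|ln(‖R_n v‖/‖v‖) - nℓ(μ)| ≥ nt) ≤ 2exp(-nt²/(32(κ_S+𝔠)²)). Then for every t > 0 and n with nt ≥ ln d, P(|ln‖R_n‖ - nℓ(μ)| ≥ nt) ≤ 2d exp(-nt²/(128(κ_S+𝔠)²)). -/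
open MeasureTheory

lemma sum_norm_coord_le {d : ℕ} (x : EuclideanSpace ℂ (Fin d)) :
    ∑ i, ‖x i‖ ≤ Real.sqrt d * ‖x‖ := by
  have h := Finset.sum_mul_sq_le_sq_mul_sq Finset.univ (fun i => ‖x i‖) (fun _ => 1)
  simp only [mul_one, one_pow, Finset.sum_const, Finset.card_univ, Fintype.card_fin,
    nsmul_eq_mul] at h
  have hx : ∑ i, ‖x i‖ ^ 2 = ‖x‖ ^ 2 := by
    rw [EuclideanSpace.norm_eq, Real.sq_sqrt (by positivity)]
  have h0 : 0 ≤ ∑ i, ‖x i‖ := Finset.sum_nonneg fun i _ => norm_nonneg _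
  nlinarith [Real.sq_sqrt (by positivity : (0:ℝ) ≤ (d:ℝ)), Real.sqrt_nonneg (d:ℝ),
    norm_nonneg x, mul_nonneg (Real.sqrt_nonneg (d:ℝ)) (norm_nonneg x)]

lemma euclid_decomp {d : ℕ} (x : EuclideanSpace ℂ (Fin d)) :
    x = ∑ i, x i • (EuclideanSpace.single i 1 : EuclideanSpace ℂ (Fin d)) := by
  have h := (EuclideanSpace.basisFun (Fin d) ℂ).sum_repr x
  simp only [EuclideanSpace.basisFun_repr, EuclideanSpace.basisFun_apply] at h
  exact h.symm

lemma opnorm_le_sqrt_mul {d : ℕ}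
    (T : EuclideanSpace ℂ (Fin d) →L[ℂ] EuclideanSpace ℂ (Fin d))
    (C : ℝ) (hC : 0 ≤ C)
    (hTC : ∀ i, ‖T (EuclideanSpace.single i 1)‖ ≤ C) :
    ‖T‖ ≤ Real.sqrt d * C := by
  apply T.opNorm_le_bound (by positivity)
  intro x
  have hx : T x = ∑ i, x i • T (EuclideanSpace.single i 1) := by
    conv_lhs => rw [euclid_decomp x]
    rw [map_sum]
    simp
  calc ‖T x‖ ≤ ∑ i, ‖x i • T (EuclideanSpace.single i 1)‖ := by
        rw [hx]; exact norm_sum_le _ _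
    _ = ∑ i, ‖x i‖ * ‖T (EuclideanSpace.single i 1)‖ := by
        simp [norm_smul]
    _ ≤ ∑ i, ‖x i‖ * C := Finset.sum_le_sum fun i _ =>
        mul_le_mul_of_nonneg_left (hTC i) (norm_nonneg _)
    _ = (∑ i, ‖x i‖) * C := by rw [Finset.sum_mul]
    _ ≤ (Real.sqrt d * ‖x‖) * C :=
        mul_le_mul_of_nonneg_right (sum_norm_coord_le x) hC
    _ = Real.sqrt d * C * ‖x‖ := by ring

/-- Let `(R_n)` be random matrix products (viewed as operators on `ℂ^d`
with the Euclidean norm), `ℓ` the top Lyapunov exponent and `K = κ_S + 𝔠 > 0`. Suppose the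
vector-norm concentration estimate: for all `t > 0`, `n` and nonzero `v`,
`P(|ln(‖R_n v‖/‖v‖) - nℓ| ≥ nt) ≤ 2 exp(-nt²/(32 K²))`. Then for every `t > 0` and `n` with
`n t ≥ ln d`, `P(|ln ‖R_n‖ - nℓ| ≥ nt) ≤ 2 d exp(-nt²/(128 K²))`. -/
theorem matrix_norm_concentration (d : ℕ) [NeZero d]
    {Ω : Type*} {mΩ : MeasurableSpace Ω} (Pr : Measure Ω) [IsProbabilityMeasure Pr]
    (R : ℕ → Ω → (EuclideanSpace ℂ (Fin d) →L[ℂ] EuclideanSpace ℂ (Fin d)))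
    (ℓ : ℝ) (K : ℝ) (hK : 0 < K)
    (hvec : ∀ t : ℝ, 0 < t → ∀ n : ℕ, ∀ v : EuclideanSpace ℂ (Fin d), v ≠ 0 →
      Pr {ω | (n : ℝ) * t ≤ |Real.log (‖R n ω v‖ / ‖v‖) - n * ℓ|} ≤
        ENNReal.ofReal (2 * Real.exp (-((n : ℝ) * t ^ 2) / (32 * K ^ 2))))
    (t : ℝ) (ht : 0 < t) (n : ℕ) (hnt : Real.log d ≤ (n : ℝ) * t) :
    Pr {ω | (n : ℝ) * t ≤ |Real.log ‖R n ω‖ - n * ℓ|} ≤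
      ENNReal.ofReal (2 * d * Real.exp (-((n : ℝ) * t ^ 2) / (128 * K ^ 2))) := by
  have hd : 0 < d := Nat.pos_of_ne_zero (NeZero.ne d)
  have hd1 : (1:ℝ) ≤ (d:ℝ) := by exact_mod_cast hd
  set e : Fin d → EuclideanSpace ℂ (Fin d) := fun i => EuclideanSpace.single i 1 with he
  have he1 : ∀ i, ‖e i‖ = 1 := fun i => by
    simp [he, EuclideanSpace.norm_single]
  have hene : ∀ i, e i ≠ 0 := fun i h => by
    have := he1 i; rw [h, norm_zero] at this; norm_num at this
  have ht2 : (0:ℝ) < t / 2 := half_pos ht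
  set A : Fin d → Set Ω := fun i =>
    {ω | (n : ℝ) * (t / 2) ≤ |Real.log (‖R n ω (e i)‖ / ‖e i‖) - n * ℓ|} with hA
  have hsub : {ω | (n : ℝ) * t ≤ |Real.log ‖R n ω‖ - n * ℓ|} ⊆ ⋃ i, A i := by
    intro ω hω
    simp only [Set.mem_setOf_eq] at hω
    set g := R n ω with hg
    obtain ⟨i, -, hi⟩ := Finset.exists_mem_eq_sup' (Finset.univ_nonempty (α := Fin d))
      (fun i => ‖g (e i)‖)
    set M := ‖g (e i)‖ with hM
    have hmax : ∀ j, ‖g (e j)‖ ≤ M :=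
      fun j => le_of_le_of_eq (Finset.le_sup' (fun i => ‖g (e i)‖) (Finset.mem_univ j)) hi
    have hMg : M ≤ ‖g‖ := by
      calc M = ‖g (e i)‖ := rfl
        _ ≤ ‖g‖ * ‖e i‖ := g.le_opNorm _
        _ = ‖g‖ := by rw [he1, mul_one]
    have hgM : ‖g‖ ≤ Real.sqrt d * M := by
      exact opnorm_le_sqrt_mul g M (norm_nonneg _) fun j => hmax j
    refine Set.mem_iUnion.2 ⟨i, ?_⟩
    simp only [hA, Set.mem_setOf_eq, he1, div_one]
    have hnt2 : (n : ℝ) * (t / 2) ≤ (n : ℝ) * t := by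
      have : (0:ℝ) ≤ (n:ℝ) := Nat.cast_nonneg n
      nlinarith
    by_cases hg0 : ‖g‖ = 0
    · have hgz : g = 0 := norm_eq_zero.mp hg0
      have hMz : ‖g (e i)‖ = 0 := by rw [hgz]; simp
      rw [hMz]
      rw [hg0] at hω
      linarith [hω]
    · have hgpos : 0 < ‖g‖ := lt_of_le_of_ne (norm_nonneg _) (Ne.symm hg0)
      have hMpos : 0 < M := by
        by_contra hMn
        push_neg at hMn
        have : Real.sqrt d * M ≤ 0 :=
          mul_nonpos_of_nonneg_of_nonpos (Real.sqrt_nonneg _) hMn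
        linarith
      have hlogle : Real.log M ≤ Real.log ‖g‖ := Real.log_le_log hMpos hMg
      have hlogge : Real.log ‖g‖ ≤ Real.log d / 2 + Real.log M := by
        calc Real.log ‖g‖ ≤ Real.log (Real.sqrt d * M) := Real.log_le_log hgpos hgM
          _ = Real.log (Real.sqrt d) + Real.log M :=
            Real.log_mul (by positivity) (ne_of_gt hMpos)
          _ = Real.log d / 2 + Real.log M := by rw [Real.log_sqrt (by positivity)]
    -- split on the sign of the deviation
      rcases le_abs'.mp hω with hlo | hhi
      · -- log ‖g‖ - nℓ ≤ -nt
        have : Real.log M - (n : ℝ) * ℓ ≤ -((n : ℝ) * (t / 2)) := by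
          have := hlogle
          linarith
        calc (n : ℝ) * (t / 2) ≤ -(Real.log M - (n : ℝ) * ℓ) := by linarith
          _ ≤ |Real.log M - (n : ℝ) * ℓ| := neg_le_abs _
      · -- nt ≤ log ‖g‖ - nℓ
        have hhalf : Real.log d / 2 ≤ (n : ℝ) * t / 2 := by linarith
        have : (n : ℝ) * (t / 2) ≤ Real.log M - (n : ℝ) * ℓ := by
          have := hlogge
          nlinarith [Nat.cast_nonneg (α := ℝ) n]
        exact this.trans (le_abs_self _)
  have hexp : -((n : ℝ) * (t / 2) ^ 2) / (32 * K ^ 2) = -((n : ℝ) * t ^ 2) / (128 * K ^ 2) := by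
    ring
  calc Pr {ω | (n : ℝ) * t ≤ |Real.log ‖R n ω‖ - n * ℓ|}
      ≤ Pr (⋃ i, A i) := measure_mono hsub
    _ ≤ ∑ i : Fin d, Pr (A i) := measure_iUnion_fintype_le Pr A
    _ ≤ ∑ _i : Fin d,
        ENNReal.ofReal (2 * Real.exp (-((n : ℝ) * (t / 2) ^ 2) / (32 * K ^ 2))) :=
      Finset.sum_le_sum fun i _ => hvec (t / 2) ht2 n (e i) (hene i)
    _ = (d : ENNReal) * ENNReal.ofReal (2 * Real.exp (-((n : ℝ) * t ^ 2) / (128 * K ^ 2))) := by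
      rw [Finset.sum_const, Finset.card_univ, Fintype.card_fin, nsmul_eq_mul, hexp]
    _ = ENNReal.ofReal (2 * d * Real.exp (-((n : ℝ) * t ^ 2) / (128 * K ^ 2))) := by
      rw [← ENNReal.ofReal_natCast d, ← ENNReal.ofReal_mul (by positivity)]
      congr 1
      ring
end
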